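/- Let A be an M×N real matrix with restricted isometry constant δ_t. For any vector v ∈ ℝ^N and index set T' with |T' ∪ supp(v)| ≤ t, one has ‖((I - AᵀA)v)_{T'}‖₂ ≤ δ_t ‖v‖₂, where x_{T'} denotes the restriction of x to T' (zeroing entries outside T'). -/
import Mathlib


open Matrix Finset Real MeasureTheory ProbabilityTheory
open scoped BigOperators

noncomputable section

/-- squared Euclidean norm -/
def nsq {n : ℕ} (v : Fin n → ℝ) : ℝ := ∑ i, v i ^ 2

/-- Euclidean norm -/
def nrm {n : ℕ} (v : Fin n → ℝ) : ℝ := Real.sqrt (∑ i, v i ^ 2)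

open Classical in
/-- support of a vector, as a finset -/
def suppF {n : ℕ} (x : Fin n → ℝ) : Finset (Fin n) :=
  Finset.univ.filter (fun i => x i ≠ 0)

/-- `x` is `s`-sparse -/
def Sparse {n : ℕ} (s : ℕ) (x : Fin n → ℝ) : Prop := (suppF x).card ≤ s

/-- `δ` is a restricted isometry constant of order `t` for `A`:
`(1-δ)‖x‖² ≤ ‖Ax‖² ≤ (1+δ)‖x‖²` for all `t`-sparse `x`. -/
def IsRIP {M N : ℕ} (A : Matrix (Fin M) (Fin N) ℝ) (t : ℕ) (δ : ℝ) : Prop :=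
  ∀ x : Fin N → ℝ, Sparse t x →
    (1 - δ) * nsq x ≤ nsq (A.mulVec x) ∧ nsq (A.mulVec x) ≤ (1 + δ) * nsq x

/-- restriction of a vector to an index set (zeroing entries outside it) -/
def restr {n : ℕ} (T : Finset (Fin n)) (x : Fin n → ℝ) : Fin n → ℝ :=
  fun i => if i ∈ T then x i else 0

/-- submatrix of the columns of `A` indexed by `T` -/
def colSub {M N : ℕ} (A : Matrix (Fin M) (Fin N) ℝ) (T : Finset (Fin N)) :
    Matrix (Fin M) T ℝ :=
  fun i j => A i j.val

/-- the feedback step: `μ'_T = x_T + (A_Tᵀ A_T)⁻¹ A_Tᵀ A_{Tᶜ} x_{Tᶜ}`, `μ'_{Tᶜ} = 0`. -/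
def feedback {M N : ℕ} (A : Matrix (Fin M) (Fin N) ℝ) (T : Finset (Fin N))
    (x : Fin N → ℝ) : Fin N → ℝ :=
  fun i => if h : i ∈ T then
    x i + ((((colSub A T)ᵀ * colSub A T)⁻¹ * (colSub A T)ᵀ).mulVec
      (A.mulVec (restr Tᶜ x))) ⟨i, h⟩
  else 0

/-- `hatAbs x k` is the `k`-th largest absolute entry of `x` (1-based index). -/
def hatAbs {n : ℕ} (x : Fin n → ℝ) (k : ℕ) : ℝ :=
  if h : k - 1 < n then |x (Tuple.sort (fun i => -|x i|) ⟨k - 1, h⟩)| else 0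

/-- `T` contains the indices of the `p` largest absolute entries of `x`. -/
def containsTop {n : ℕ} (x : Fin n → ℝ) (p : ℕ) (T : Finset (Fin n)) : Prop :=
  ∀ j : Fin n, (j : ℕ) < p → Tuple.sort (fun i => -|x i|) j ∈ T

/-- The NST+HT+FB algorithm: `T k` is the set of the `s` largest absolute entries of the
feasible iterate `x^k`, `μ^k` is the thresholding-plus-feedback of `x^k` on `T k`, and
`x^{k+1} = μ^k + Aᵀ(AAᵀ)⁻¹(y - Aμ^k)` is the null space tuning step. -/
def NSTSpec {M N : ℕ} (A : Matrix (Fin M) (Fin N) ℝ) (y : Fin M → ℝ) (s : ℕ)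
    (T : ℕ → Finset (Fin N)) (xs μ : ℕ → Fin N → ℝ) : Prop :=
  (∀ k, A.mulVec (xs k) = y) ∧
  (∀ k, (T k).card = s) ∧
  (∀ k, ∀ i ∈ T k, ∀ j ∉ T k, |xs k j| ≤ |xs k i|) ∧
  (∀ k, μ k = feedback A (T k) (xs k)) ∧
  (∀ k, xs (k + 1) = μ k + (Aᵀ * (A * Aᵀ)⁻¹).mulVec (y - A.mulVec (μ k)))

/-- The adaptive AdptNST+HT+FB algorithm: identical to NST+HT+FB except that at step `k`
the index set `T k` consists of the `k` largest absolute entries of `x^k`. -/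
def AdptSpec {M N : ℕ} (A : Matrix (Fin M) (Fin N) ℝ) (y : Fin M → ℝ)
    (T : ℕ → Finset (Fin N)) (xs μ : ℕ → Fin N → ℝ) : Prop :=
  (∀ k, A.mulVec (xs k) = y) ∧
  (∀ k, (T k).card = k) ∧
  (∀ k, ∀ i ∈ T k, ∀ j ∉ T k, |xs k j| ≤ |xs k i|) ∧
  (∀ k, μ k = feedback A (T k) (xs k)) ∧
  (∀ k, xs (k + 1) = μ k + (Aᵀ * (A * Aᵀ)⁻¹).mulVec (y - A.mulVec (μ k)))

lemma nsq_nonneg' {n : ℕ} (v : Fin n → ℝ) : 0 ≤ nsq v :=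
  Finset.sum_nonneg fun i _ => sq_nonneg _

lemma nrm_sq' {n : ℕ} (v : Fin n → ℝ) : nrm v ^ 2 = nsq v := by
  simpa [nrm, nsq] using Real.sq_sqrt (nsq_nonneg' v)

lemma polar {n : ℕ} (a b : Fin n → ℝ) :
    nsq (a + b) - nsq (a - b) = 4 * (a ⬝ᵥ b) := by
  simp only [nsq, dotProduct, ← Finset.sum_sub_distrib, Finset.mul_sum]
  refine Finset.sum_congr rfl fun i _ => ?_
  simp [Pi.add_apply, Pi.sub_apply]; ring

lemma parallel {n : ℕ} (a b : Fin n → ℝ) :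
    nsq (a + b) + nsq (a - b) = 2 * (nsq a + nsq b) := by
  simp only [nsq, ← Finset.sum_add_distrib, Finset.mul_sum]
  refine Finset.sum_congr rfl fun i _ => ?_
  simp [Pi.add_apply, Pi.sub_apply]; ring

lemma nsq_smul {n : ℕ} (c : ℝ) (v : Fin n → ℝ) : nsq (c • v) = c ^ 2 * nsq v := by
  simp [nsq, Finset.mul_sum, mul_pow]

lemma key_bilinear {M N : ℕ} (A : Matrix (Fin M) (Fin N) ℝ) (t : ℕ) (δ : ℝ)
    (hRIP : IsRIP A t δ) (x y : Fin N → ℝ)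
    (h1 : Sparse t (x + y)) (h2 : Sparse t (x - y)) :
    |x ⬝ᵥ y - (A.mulVec x) ⬝ᵥ (A.mulVec y)| ≤ δ / 2 * (nsq x + nsq y) := by
  obtain ⟨ha1, ha2⟩ := hRIP (x + y) h1
  obtain ⟨hb1, hb2⟩ := hRIP (x - y) h2
  have p1 : nsq (A.mulVec (x + y)) - nsq (A.mulVec (x - y))
      = 4 * ((A.mulVec x) ⬝ᵥ (A.mulVec y)) := by
    rw [Matrix.mulVec_add, Matrix.mulVec_sub]; exact polar _ _
  have p2 := polar x y
  have par := parallel x y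
  have n1 := nsq_nonneg' (x + y)
  have n2 := nsq_nonneg' (x - y)
  have hδpar : δ * nsq (x + y) + δ * nsq (x - y) = 2 * (δ * nsq x + δ * nsq y) := by
    have := congrArg (δ * ·) par
    linarith [this]
  rw [abs_le]
  constructor <;> nlinarith [hδpar]

lemma sparse_of_subset {n : ℕ} (t : ℕ) (S : Finset (Fin n)) (w : Fin n → ℝ)
    (hS : S.card ≤ t) (h : ∀ i, i ∉ S → w i = 0) : Sparse t w := by
  refine le_trans (Finset.card_le_card ?_) hS
  intro i hi
  simp only [suppF, Finset.mem_filter, Finset.mem_univ, true_and] at hi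
  by_contra hc
  exact hi (h i hc)

/-- RIP restricted-vector bound. -/
theorem stmt1 {M N : ℕ} (A : Matrix (Fin M) (Fin N) ℝ) (t : ℕ) (δt : ℝ)
    (hRIP : IsRIP A t δt) (v : Fin N → ℝ) (T' : Finset (Fin N))
    (hsupp : (T' ∪ suppF v).card ≤ t) :
    nrm (restr T' (v - Aᵀ.mulVec (A.mulVec v))) ≤ δt * nrm v := by
  classical
  set w : Fin N → ℝ := v - Aᵀ.mulVec (A.mulVec v) with hw
  set u : Fin N → ℝ := restr T' w with hu
  set S : Finset (Fin N) := T' ∪ suppF v with hS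
  have hv_supp : ∀ i, i ∉ S → v i = 0 := by
    intro i hi
    by_contra hc
    exact hi (Finset.mem_union_right _ (by simp [suppF, hc]))
  have hu_supp : ∀ i, i ∉ S → u i = 0 := by
    intro i hi
    have : i ∉ T' := fun h => hi (Finset.mem_union_left _ h)
    simp [hu, restr, this]
  -- case v = 0
  by_cases hv0 : v = 0
  · subst hv0
    have : u = 0 := by
      funext i
      simp [hu, hw, restr, Matrix.mulVec_zero]
    simp [this, nrm, Pi.zero_apply]
  -- v ≠ 0
  have hnsqv : 0 < nsq v := by
    rcases Function.ne_iff.mp hv0 with ⟨i, hi⟩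
    refine Finset.sum_pos' (fun j _ => sq_nonneg _) ⟨i, Finset.mem_univ i, ?_⟩
    simpa using pow_pos (abs_pos.mpr (by simpa using hi)) 2 |>.trans_le (by rw [sq_abs])
  have hSparse_v : Sparse t v := sparse_of_subset t S v hsupp hv_supp
  have hδ : 0 ≤ δt := by
    obtain ⟨h1, h2⟩ := hRIP v hSparse_v
    nlinarith
  have hnrmv : 0 < nrm v := Real.sqrt_pos.mpr hnsqv
  have hnrmu : 0 ≤ nrm u := Real.sqrt_nonneg _
  -- key identity: nsq u = u ⬝ᵥ v - (A u) ⬝ᵥ (A v)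
  have hid : nsq u = u ⬝ᵥ v - (A.mulVec u) ⬝ᵥ (A.mulVec v) := by
    have h1 : nsq u = u ⬝ᵥ w := by
      simp only [nsq, dotProduct]
      refine Finset.sum_congr rfl fun i _ => ?_
      by_cases hi : i ∈ T'
      · have : u i = w i := by simp [hu, restr, hi]
        rw [this]; ring
      · have : u i = 0 := by simp [hu, restr, hi]
        simp [this]
    have h2 : u ⬝ᵥ w = u ⬝ᵥ v - u ⬝ᵥ (Aᵀ.mulVec (A.mulVec v)) := by
      simp [hw, dotProduct_sub]
    have h3 : u ⬝ᵥ (Aᵀ.mulVec (A.mulVec v)) = (A.mulVec u) ⬝ᵥ (A.mulVec v) := by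
      rw [Matrix.dotProduct_mulVec, Matrix.vecMul_transpose]
    rw [h1, h2, h3]
  -- case nrm u = 0
  by_cases hu0 : nrm u = 0
  · rw [hu0]; positivity
  have hnrmu' : 0 < nrm u := lt_of_le_of_ne hnrmu (Ne.symm hu0)
  -- apply bilinear bound to scaled vectors
  set x : Fin N → ℝ := nrm v • u with hx
  set y : Fin N → ℝ := nrm u • v with hy
  have hsupp_xy : ∀ i, i ∉ S → (x + y) i = 0 := by
    intro i hi; simp [hx, hy, hu_supp i hi, hv_supp i hi]
  have hsupp_xy' : ∀ i, i ∉ S → (x - y) i = 0 := by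
    intro i hi; simp [hx, hy, hu_supp i hi, hv_supp i hi]
  have hkey := key_bilinear A t δt hRIP x y
    (sparse_of_subset t S _ hsupp hsupp_xy)
    (sparse_of_subset t S _ hsupp hsupp_xy')
  have hdot : x ⬝ᵥ y = (nrm v * nrm u) * (u ⬝ᵥ v) := by
    simp [hx, hy, smul_dotProduct, dotProduct_smul]; ring
  have hAdot : (A.mulVec x) ⬝ᵥ (A.mulVec y)
      = (nrm v * nrm u) * ((A.mulVec u) ⬝ᵥ (A.mulVec v)) := by
    simp [hx, hy, Matrix.mulVec_smul, smul_dotProduct, dotProduct_smul]; ring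
  rw [hdot, hAdot, ← mul_sub, ← hid, nsq_smul, nsq_smul, nrm_sq', nrm_sq'] at hkey
  have habs : |nrm v * nrm u * nsq u| = nrm v * nrm u * nsq u := by
    apply abs_of_nonneg
    have := nsq_nonneg' u
    positivity
  rw [habs] at hkey
  -- hkey : nrm v * nrm u * nsq u ≤ δt / 2 * (nsq v * nsq u + nsq u * nsq v)
  have hnsqu : nsq u = nrm u ^ 2 := (nrm_sq' u).symm
  have hnsqv' : nsq v = nrm v ^ 2 := (nrm_sq' v).symm
  rw [hnsqu, hnsqv'] at hkey
  nlinarith [mul_pos hnrmv hnrmu', sq_nonneg (nrm u), sq_nonneg (nrm v),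
    mul_pos (mul_pos hnrmv hnrmu') hnrmu']
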